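/- Let γ₂ ≠ 0, Υ₁, Υ₂ ∈ ℝ and let W(x) = Υ₁ + Υ₂e^{γ₂x}. Suppose 𝒵 : [0,∞) → ℝ is continuous, ξ : [0,∞) → ℝ is continuously differentiable, and 𝒵 satisfies 𝒵(x) = 1 + ∫₀ˣ W(x−y)ξ(y)𝒵(y)dy for all x ≥ 0. Then 𝒵 is twice continuously differentiable and satisfies 𝒵''(x) = ((Υ₁+Υ₂)ξ(x)+γ₂)𝒵'(x) + ((Υ₁+Υ₂)ξ'(x) − γ₂Υ₁ξ(x))𝒵(x), with 𝒵(0) = 1 and 𝒵'(0) = (Υ₁+Υ₂)ξ(0). -/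

import Mathlib

/-!
The kernel is separable, `W (x - y) = Υ₁ + Υ₂ e^{γ₂ x} e^{-γ₂ y}`, so the renewal equation writes
`𝒵 - 1` as `Υ₁ A + Υ₂ e^{γ₂ x} B` with `A`, `B` primitives of continuous functions. Differentiating,
`𝒵' = (Υ₁ + Υ₂) ξ 𝒵 + γ₂ (𝒵 - 1 - Υ₁ A)`, where `A = ∫₀ˣ ξ 𝒵`. The right-hand side is continuous,
so `𝒵` is `C¹`; hence the right-hand side is `C¹`, so `𝒵` is `C²`, and differentiating the
identity once more gives the ODE.
-/
open Set Topology intervalIntegral Real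
open MeasureTheory (volume)

theorem ContinuousOn.hasDerivWithinAt_integral_Ici {g : ℝ → ℝ} {a b : ℝ}
    (hg : ContinuousOn g (Ici a)) (hb : a ≤ b) :
    HasDerivWithinAt (fun x => ∫ y in a..x, g y) (g b) (Ici a) b := by
  have hint : IntervalIntegrable g volume a b :=
    (hg.mono Icc_subset_Ici_self).intervalIntegrable_of_Icc hb
  rcases hb.eq_or_lt with rfl | hab
  · exact integral_hasDerivWithinAt_right hint
      ((hg.mono Ioi_subset_Ici_self).stronglyMeasurableAtFilter_nhdsWithin measurableSet_Ioi a)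
      ((hg a self_mem_Ici).mono Ioi_subset_Ici_self)
  · have hnhds : Ici a ∈ 𝓝 b := Ici_mem_nhds hab
    exact (integral_hasDerivAt_right hint
      ⟨Ici a, hnhds, hg.aestronglyMeasurable measurableSet_Ici⟩
      ((hg b hb).continuousAt hnhds)).hasDerivWithinAt

theorem contDiffOn_succ_of_hasDerivWithinAt {𝕜 F : Type*} [NontriviallyNormedField 𝕜]
    [NormedAddCommGroup F] [NormedSpace 𝕜 F] {s : Set 𝕜} {f f' : 𝕜 → F} {n : ℕ}
    (hs : UniqueDiffOn 𝕜 s) (hf : ∀ x ∈ s, HasDerivWithinAt f (f' x) s x)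
    (hf' : ContDiffOn 𝕜 n f' s) : ContDiffOn 𝕜 (n + 1) f s := by
  rw [contDiffOn_succ_iff_derivWithin hs]
  refine ⟨fun x hx => (hf x hx).differentiableWithinAt, by simp, hf'.congr fun x hx => ?_⟩
  exact (hf x hx).derivWithin (hs x hx)

theorem hasDerivWithinAt_integral_exp_kernel {g : ℝ → ℝ} {a b : ℝ} (γ Υ₁ Υ₂ : ℝ)
    (hg : ContinuousOn g (Ici a)) (hb : a ≤ b) :
    HasDerivWithinAt (fun x => ∫ y in a..x, (Υ₁ + Υ₂ * exp (γ * (x - y))) * g y)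
      ((Υ₁ + Υ₂) * g b + γ * ((∫ y in a..b, (Υ₁ + Υ₂ * exp (γ * (b - y))) * g y)
        - Υ₁ * ∫ y in a..b, g y)) (Ici a) b := by
  set A : ℝ → ℝ := fun x => ∫ y in a..x, g y
  set B : ℝ → ℝ := fun x => ∫ y in a..x, exp (-(γ * y)) * g y
  have hge : ContinuousOn (fun y => exp (-(γ * y)) * g y) (Ici a) :=
    (by fun_prop : Continuous fun y => exp (-(γ * y))).continuousOn.mul hg
  have hsplit : ∀ x ∈ Ici a, ∫ y in a..x, (Υ₁ + Υ₂ * exp (γ * (x - y))) * g y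
      = Υ₁ * A x + Υ₂ * (exp (γ * x) * B x) := by
    intro x hx
    have hint : ∀ {f : ℝ → ℝ}, ContinuousOn f (Ici a) → IntervalIntegrable f volume a x :=
      fun hf => (hf.mono Icc_subset_Ici_self).intervalIntegrable_of_Icc hx
    have hkernel : ∀ y, (Υ₁ + Υ₂ * exp (γ * (x - y))) * g y
        = Υ₁ * g y + Υ₂ * exp (γ * x) * (exp (-(γ * y)) * g y) := fun y => by
      rw [mul_sub, sub_eq_add_neg, exp_add]; ring
    simp_rw [hkernel]
    rw [integral_add ((hint hg).const_mul _) ((hint hge).const_mul _), integral_const_mul,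
      integral_const_mul, mul_assoc]
  have hderiv : HasDerivWithinAt (fun x => Υ₁ * A x + Υ₂ * (exp (γ * x) * B x))
      (Υ₁ * g b + Υ₂ * (γ * exp (γ * b) * B b + exp (γ * b) * (exp (-(γ * b)) * g b)))
      (Ici a) b := by
    have hexp : HasDerivAt (fun x => exp (γ * x)) (γ * exp (γ * b)) b := by
      simpa [mul_comm] using ((hasDerivAt_id b).const_mul γ).exp
    exact ((hg.hasDerivWithinAt_integral_Ici hb).const_mul Υ₁).add
      ((hexp.hasDerivWithinAt.mul (hge.hasDerivWithinAt_integral_Ici hb)).const_mul Υ₂)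
  refine (hderiv.congr (fun x hx => hsplit x hx) (hsplit b hb)).congr_deriv ?_
  rw [hsplit b hb, ← mul_assoc (exp (γ * b)), ← exp_add, add_neg_cancel, exp_zero]
  ring

theorem hasDerivWithinAt_of_eq_add_integral_exp_kernel {Z g : ℝ → ℝ} {a b : ℝ} (c γ Υ₁ Υ₂ : ℝ)
    (hg : ContinuousOn g (Ici a))
    (hZ : ∀ x ∈ Ici a, Z x = c + ∫ y in a..x, (Υ₁ + Υ₂ * exp (γ * (x - y))) * g y)
    (hb : a ≤ b) :
    HasDerivWithinAt Z ((Υ₁ + Υ₂) * g b + γ * (Z b - c - Υ₁ * ∫ y in a..b, g y)) (Ici a) b := by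
  refine (((hasDerivWithinAt_integral_exp_kernel γ Υ₁ Υ₂ hg hb).const_add c).congr hZ
    (hZ b hb)).congr_deriv ?_
  rw [hZ b hb]
  ring

theorem stmt6_general (γ₂ Υ₁ Υ₂ : ℝ) (W 𝒵 ξ : ℝ → ℝ)
    (hW : ∀ x : ℝ, W x = Υ₁ + Υ₂ * Real.exp (γ₂ * x))
    (h𝒵c : ContinuousOn 𝒵 (Ici 0))
    (hξ : ContDiffOn ℝ 1 ξ (Ici 0))
    (hren : ∀ x : ℝ, 0 ≤ x →
      𝒵 x = 1 + ∫ y in (0:ℝ)..x, W (x - y) * ξ y * 𝒵 y) :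
    ContDiffOn ℝ 2 𝒵 (Ici 0) ∧
    (∀ x : ℝ, 0 ≤ x →
      derivWithin (derivWithin 𝒵 (Ici 0)) (Ici 0) x =
        ((Υ₁ + Υ₂) * ξ x + γ₂) * derivWithin 𝒵 (Ici 0) x
          + ((Υ₁ + Υ₂) * derivWithin ξ (Ici 0) x - γ₂ * Υ₁ * ξ x) * 𝒵 x) ∧
    𝒵 0 = 1 ∧
    derivWithin 𝒵 (Ici 0) 0 = (Υ₁ + Υ₂) * ξ 0 := by
  obtain rfl : W = fun x => Υ₁ + Υ₂ * exp (γ₂ * x) := funext hW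
  set A : ℝ → ℝ := fun x => ∫ y in (0:ℝ)..x, ξ y * 𝒵 y
  set D : ℝ → ℝ := fun x => (Υ₁ + Υ₂) * (ξ x * 𝒵 x) + γ₂ * (𝒵 x - 1 - Υ₁ * A x)
  have hg : ContinuousOn (fun y => ξ y * 𝒵 y) (Ici 0) := hξ.continuousOn.mul h𝒵c
  have hA : ∀ x ∈ Ici (0:ℝ), HasDerivWithinAt A (ξ x * 𝒵 x) (Ici 0) x :=
    fun x hx => hg.hasDerivWithinAt_integral_Ici hx
  have h𝒵D : ∀ x ∈ Ici (0:ℝ), HasDerivWithinAt 𝒵 (D x) (Ici 0) x :=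
    fun x hx => hasDerivWithinAt_of_eq_add_integral_exp_kernel 1 γ₂ Υ₁ Υ₂ hg
      (fun x hx => by simp_rw [← mul_assoc]; exact hren x hx) hx
  have hD𝒵 : EqOn (derivWithin 𝒵 (Ici 0)) D (Ici 0) :=
    fun x hx => (h𝒵D x hx).derivWithin (uniqueDiffOn_Ici 0 x hx)
  have hA1 : ContDiffOn ℝ 1 A (Ici 0) :=
    contDiffOn_succ_of_hasDerivWithinAt (n := 0) (uniqueDiffOn_Ici 0) hA (contDiffOn_zero.2 hg)
  have hAc : ContinuousOn A (Ici 0) := hA1.continuousOn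
  have h𝒵1 : ContDiffOn ℝ 1 𝒵 (Ici 0) :=
    contDiffOn_succ_of_hasDerivWithinAt (n := 0) (uniqueDiffOn_Ici 0) h𝒵D
      (contDiffOn_zero.2 (by simp only [D]; fun_prop))
  have hD1 : ContDiffOn ℝ 1 D (Ici 0) := by
    simp only [D]; fun_prop
  have h𝒵0 : 𝒵 0 = 1 := by simp [hren 0 le_rfl]
  refine ⟨contDiffOn_succ_of_hasDerivWithinAt (n := 1) (uniqueDiffOn_Ici 0) h𝒵D hD1, ?_, h𝒵0, ?_⟩
  · intro x hx
    have hξ' : HasDerivWithinAt ξ (derivWithin ξ (Ici 0) x) (Ici 0) x :=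
      (hξ.differentiableOn one_ne_zero x hx).hasDerivWithinAt
    have hD' : HasDerivWithinAt D _ (Ici 0) x := ((hξ'.mul (h𝒵D x hx)).const_mul (Υ₁ + Υ₂)).add
      ((((h𝒵D x hx).sub_const 1).sub ((hA x hx).const_mul Υ₁)).const_mul γ₂)
    rw [derivWithin_congr hD𝒵 (hD𝒵 hx), hD'.derivWithin (uniqueDiffOn_Ici 0 x hx), hD𝒵 hx]
    ring
  · rw [hD𝒵 self_mem_Ici]
    simp [D, A, h𝒵0]

/-- The ω-scale function 𝒵 solving 𝒵(x) = 1 + ∫₀ˣ W(x−y)ξ(y)𝒵(y)dy with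
W(x) = Υ₁ + Υ₂e^{γ₂x} is C² and solves the stated second-order ODE. -/
theorem stmt6 (γ₂ Υ₁ Υ₂ : ℝ) (hγ : γ₂ ≠ 0) (W 𝒵 ξ : ℝ → ℝ)
    (hW : ∀ x : ℝ, W x = Υ₁ + Υ₂ * Real.exp (γ₂ * x))
    (h𝒵c : ContinuousOn 𝒵 (Ici 0))
    (hξ : ContDiffOn ℝ 1 ξ (Ici 0))
    (hren : ∀ x : ℝ, 0 ≤ x →
      𝒵 x = 1 + ∫ y in (0:ℝ)..x, W (x - y) * ξ y * 𝒵 y) :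
    ContDiffOn ℝ 2 𝒵 (Ici 0) ∧
    (∀ x : ℝ, 0 ≤ x →
      derivWithin (derivWithin 𝒵 (Ici 0)) (Ici 0) x =
        ((Υ₁ + Υ₂) * ξ x + γ₂) * derivWithin 𝒵 (Ici 0) x
          + ((Υ₁ + Υ₂) * derivWithin ξ (Ici 0) x - γ₂ * Υ₁ * ξ x) * 𝒵 x) ∧
    𝒵 0 = 1 ∧
    derivWithin 𝒵 (Ici 0) 0 = (Υ₁ + Υ₂) * ξ 0 :=
  stmt6_general γ₂ Υ₁ Υ₂ W 𝒵 ξ hW h𝒵c hξ hren
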